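/- The parametrization of the complex cone, Z with components x¹ = u¹cos u² cosh u⁴ - u³ sin u² sinh u⁴, x² = u¹ sin u² cosh u⁴ + u³ cos u² sinh u⁴, x³ = u¹, y¹ = u¹ sin u² sinh u⁴ + u³ cos u² cosh u⁴, y² = -u¹ cos u² sinh u⁴ + u³ sin u² cosh u⁴, y³ = u³, satisfies (x¹+iy¹)² + (x²+iy²)² - (x³+iy³)² = 0, and the induced metric with respect to the signature (+,+,+,-,-,-) form on ℝ⁶ has nonzero components exactly g₁₁ = -g₃₃ = 2, g₂₂ = -g₄₄ = (u¹)² - (u³)², g₂₄ = g₄₂ = 2u¹u³. -/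

import Mathlib

open Real

/-- Parametrization of the complex cone `(Z¹)² + (Z²)² - (Z³)² = 0` in
`ℂ³ ≅ ℝ⁶` (`i`-splitting: `(x¹,x²,x³,y¹,y²,y³)`). -/
noncomputable def Zcone (p : Fin 4 → ℝ) : Fin 6 → ℝ :=
  ![p 0 * cos (p 1) * cosh (p 3) - p 2 * sin (p 1) * sinh (p 3),
    p 0 * sin (p 1) * cosh (p 3) + p 2 * cos (p 1) * sinh (p 3),
    p 0,
    p 0 * sin (p 1) * sinh (p 3) + p 2 * cos (p 1) * cosh (p 3),
    -(p 0 * cos (p 1) * sinh (p 3)) + p 2 * sin (p 1) * cosh (p 3),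
    p 2]

/-- The bilinear form of signature `(+,+,+,-,-,-)` on `ℝ⁶`. -/
def ip6 (a b : Fin 6 → ℝ) : ℝ :=
  a 0 * b 0 + a 1 * b 1 + a 2 * b 2 - a 3 * b 3 - a 4 * b 4 - a 5 * b 5

/-- The tangent vector `∂ᵢZ`. -/
noncomputable def dZcone (i : Fin 4) (p : Fin 4 → ℝ) : Fin 6 → ℝ :=
  fun k => fderiv ℝ (fun q => Zcone q k) p (Pi.single i 1)

/-!
In the complex coordinates `w = u¹ + i u³` and `ζ = u² - i u⁴` the parametrization is
`Z = w • φ(ζ)` with `φ = (cos, sin, 1)`, so it lies on the cone because `cos² + sin² = 1`.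
Under the `i`-splitting the form `⟨a, b⟩` is the real part of the complex bilinear form
`∑ₖ aₖ bₖ` on `ℂ³`. Since `Z` is holomorphic in `(w, ζ)`, each `∂ᵢZ` is
`(∂ᵢw) φ(ζ) + (∂ᵢζ) w φ'(ζ)`, and `∑ φₖ² = 2`, `∑ φₖ φₖ' = 0`, `∑ φₖ'² = 1` give
`g = Re (2 dw ⊗ dw + w² dζ ⊗ dζ)`.
-/

open Complex ContinuousLinearMap

namespace Complex

lemma cos_sub_mul_I (x y : ℂ) : cos (x - y * I) = cos x * cosh y + sin x * sinh y * I := by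
  simpa [sub_eq_add_neg] using cos_add_mul_I x (-y)

lemma sin_sub_mul_I (x y : ℂ) : sin (x - y * I) = sin x * cosh y - cos x * sinh y * I := by
  simpa [sub_eq_add_neg] using sin_add_mul_I x (-y)

end Complex

lemma hasFDerivAt_mul_comp {E : Type*} [NormedAddCommGroup E] [NormedSpace ℝ E]
    (a b : E →L[ℝ] ℂ) {φ : ℂ → ℂ} {φ' : ℂ} {p : E} (h : HasDerivAt φ φ' (b p)) :
    HasFDerivAt (fun q => a q * φ (b q)) (φ (b p) • a + (a p * φ') • b) p := by
  have hφ : HasFDerivAt (fun q => φ (b q)) (φ' • b) p :=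
    ((h.hasFDerivAt.restrictScalars ℝ).comp p b.hasFDerivAt).congr_fderiv
      (by ext v; simp [mul_comm])
  exact (a.hasFDerivAt.mul hφ).congr_fderiv (by ext v; simp; ring)

noncomputable def coneW : (Fin 4 → ℝ) →L[ℝ] ℂ :=
  ofRealCLM.comp (proj 0) + I • ofRealCLM.comp (proj 2)

noncomputable def coneZeta : (Fin 4 → ℝ) →L[ℝ] ℂ :=
  ofRealCLM.comp (proj 1) - I • ofRealCLM.comp (proj 3)

@[simp] lemma coneW_apply (p : Fin 4 → ℝ) : coneW p = p 0 + p 2 * I := by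
  simp [coneW, mul_comm]

@[simp] lemma coneZeta_apply (p : Fin 4 → ℝ) : coneZeta p = p 1 - p 3 * I := by
  simp [coneZeta, mul_comm]

noncomputable def conePhi : Fin 3 → ℂ → ℂ := ![cos, sin, fun _ => 1]

noncomputable def conePhiDeriv : Fin 3 → ℂ → ℂ := ![fun z => -sin z, cos, fun _ => 0]

lemma hasDerivAt_conePhi (k : Fin 3) (z : ℂ) : HasDerivAt (conePhi k) (conePhiDeriv k z) z := by
  fin_cases k
  exacts [hasDerivAt_cos z, hasDerivAt_sin z, hasDerivAt_const z 1]

def complexify (a : Fin 6 → ℝ) (k : Fin 3) : ℂ := a (Fin.castAdd 3 k) + I * a (Fin.natAdd 3 k)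

@[simp] lemma re_complexify (a : Fin 6 → ℝ) (k : Fin 3) :
    (complexify a k).re = a (Fin.castAdd 3 k) := by
  simp [complexify]

@[simp] lemma im_complexify (a : Fin 6 → ℝ) (k : Fin 3) :
    (complexify a k).im = a (Fin.natAdd 3 k) := by
  simp [complexify]

lemma ip6_eq_re_sum (a b : Fin 6 → ℝ) :
    ip6 a b = (∑ k, complexify a k * complexify b k).re := by
  simp [ip6, complexify, Fin.sum_univ_three]
  ring

lemma complexify_Zcone (p : Fin 4 → ℝ) (k : Fin 3) :
    complexify (Zcone p) k = coneW p * conePhi k (coneZeta p) := by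
  fin_cases k <;> apply Complex.ext <;>
    simp [complexify, Zcone, conePhi, cos_sub_mul_I, sin_sub_mul_I, ← ofReal_cos, ← ofReal_sin,
      ← ofReal_cosh, ← ofReal_sinh] <;>
    ring

lemma complexify_Zcone_isotropic (p : Fin 4 → ℝ) :
    complexify (Zcone p) 0 ^ 2 + complexify (Zcone p) 1 ^ 2 - complexify (Zcone p) 2 ^ 2 = 0 := by
  simp only [complexify_Zcone, conePhi, Matrix.cons_val]
  linear_combination coneW p ^ 2 * Complex.cos_sq_add_sin_sq (coneZeta p)

lemma complexify_dZcone (p : Fin 4 → ℝ) (i : Fin 4) (k : Fin 3) :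
    complexify (dZcone i p) k =
      coneW (Pi.single i 1) * conePhi k (coneZeta p)
        + coneW p * conePhiDeriv k (coneZeta p) * coneZeta (Pi.single i 1) := by
  have hF := hasFDerivAt_mul_comp coneW coneZeta (hasDerivAt_conePhi k (coneZeta p))
  have hre : HasFDerivAt (fun q => (coneW q * conePhi k (coneZeta q)).re) _ p :=
    reCLM.hasFDerivAt.comp p hF
  have him : HasFDerivAt (fun q => (coneW q * conePhi k (coneZeta q)).im) _ p :=
    imCLM.hasFDerivAt.comp p hF
  have hZ (q : Fin 4 → ℝ) : Zcone q (Fin.castAdd 3 k) = (coneW q * conePhi k (coneZeta q)).re ∧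
      Zcone q (Fin.natAdd 3 k) = (coneW q * conePhi k (coneZeta q)).im := by
    simp only [← complexify_Zcone, re_complexify, im_complexify, and_self]
  apply Complex.ext
  · simp only [re_complexify, dZcone, hZ, hre.fderiv]
    simp; ring
  · simp only [im_complexify, dZcone, hZ, him.fderiv]
    simp; ring

lemma ip6_dZcone (p : Fin 4 → ℝ) (i j : Fin 4) :
    ip6 (dZcone i p) (dZcone j p) =
      (2 * coneW (Pi.single i 1) * coneW (Pi.single j 1)
        + coneW p ^ 2 * coneZeta (Pi.single i 1) * coneZeta (Pi.single j 1)).re := by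
  rw [ip6_eq_re_sum]
  congr 1
  simp only [complexify_dZcone, Fin.sum_univ_three, conePhi, conePhiDeriv, Matrix.cons_val]
  linear_combination (coneW (Pi.single i 1) * coneW (Pi.single j 1)
    + coneW p ^ 2 * coneZeta (Pi.single i 1) * coneZeta (Pi.single j 1))
      * Complex.cos_sq_add_sin_sq (coneZeta p)

/-- The map `Z` lies on the complex cone, `(x¹+iy¹)²+(x²+iy²)²-(x³+iy³)² = 0`,
and the induced metric has nonzero components exactly `g₁₁ = -g₃₃ = 2`,
`g₂₂ = -g₄₄ = (u¹)² - (u³)²`, `g₂₄ = g₄₂ = 2u¹u³`. -/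
theorem complex_cone_parametrization :
    ∀ p : Fin 4 → ℝ,
      ((Zcone p 0 : ℂ) + Complex.I * Zcone p 3) ^ 2
        + ((Zcone p 1 : ℂ) + Complex.I * Zcone p 4) ^ 2
        - ((Zcone p 2 : ℂ) + Complex.I * Zcone p 5) ^ 2 = 0 ∧
      ∀ i j : Fin 4,
        ip6 (dZcone i p) (dZcone j p) =
          !![2, 0, 0, 0;
             0, (p 0) ^ 2 - (p 2) ^ 2, 0, 2 * p 0 * p 2;
             0, 0, -2, 0;
             0, 2 * p 0 * p 2, 0, -((p 0) ^ 2 - (p 2) ^ 2)] i j := by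
  intro p
  refine ⟨complexify_Zcone_isotropic p, fun i j => ?_⟩
  rw [ip6_dZcone]
  fin_cases i <;> fin_cases j <;> simp [sq] <;> ring
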